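/- arXiv:1708.00620 — 13 statements merged into one kernel-verified Lean document; each statement's English description precedes it below -/
import Mathlib

section
/- If h is a positive integer such that both h and h+1 are harmonic numbers, then h ∈ {1, 2, 3, 8}. Equivalently, the only two consecutive harmonic numbers greater than 4 are 8 and 9 (Gersonides' Theorem, 1342). -/
/-- A harmonic number is a positive integer of the form 2^a * 3^b. -/
def IsHarmonic (n : ℕ) : Prop := ∃ a b : ℕ, n = 2 ^ a * 3 ^ b

/-!
Of two consecutive harmonic numbers `h, h + 1 > 1`, the odd one is a power of `3` greater
than `1`, so the other one is prime to `3` and hence a power of `2`. This leaves the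
equations `3 ^ b + 1 = 2 ^ c` and `2 ^ a + 1 = 3 ^ d`, which congruences modulo `8` and
modulo `80` cut down to their small solutions.
-/

namespace IsHarmonic

variable {n : ℕ}

theorem exists_eq_three_pow (hn : IsHarmonic n) (h2 : ¬ 2 ∣ n) : ∃ b, n = 3 ^ b := by
  obtain ⟨a, b, rfl⟩ := hn
  rcases a with _ | a
  · exact ⟨b, by simp⟩
  · exact absurd (dvd_mul_of_dvd_left (dvd_pow_self 2 a.succ_ne_zero) _) h2

theorem exists_eq_two_pow (hn : IsHarmonic n) (h3 : ¬ 3 ∣ n) : ∃ a, n = 2 ^ a := by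
  obtain ⟨a, b, rfl⟩ := hn
  rcases b with _ | b
  · exact ⟨a, by simp⟩
  · exact absurd (dvd_mul_of_dvd_right (dvd_pow_self 3 b.succ_ne_zero) _) h3

end IsHarmonic

theorem three_pow_mod_eight (b : ℕ) : 3 ^ b % 8 = 1 ∨ 3 ^ b % 8 = 3 := by
  induction b with
  | zero => simp
  | succ b ih => rw [pow_succ]; omega

theorem three_pow_mod_eighty (d : ℕ) :
    3 ^ d % 80 = 1 ∨ 3 ^ d % 80 = 3 ∨ 3 ^ d % 80 = 9 ∨ 3 ^ d % 80 = 27 := by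
  induction d with
  | zero => simp
  | succ d ih => rw [pow_succ]; omega

theorem two_pow_mod_eighty {a : ℕ} (ha : 4 ≤ a) :
    2 ^ a % 80 = 16 ∨ 2 ^ a % 80 = 32 ∨ 2 ^ a % 80 = 48 ∨ 2 ^ a % 80 = 64 := by
  induction a, ha using Nat.le_induction with
  | base => norm_num
  | succ a _ ih => rw [pow_succ]; omega

theorem three_pow_add_one_eq_two_pow {b c : ℕ} (h : 3 ^ b + 1 = 2 ^ c) :
    b = 0 ∧ c = 1 ∨ b = 1 ∧ c = 2 := by
  have hc : c < 3 := by
    by_contra! hc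
    have h8 : 2 ^ 3 ∣ 2 ^ c := pow_dvd_pow 2 hc
    have := three_pow_mod_eight b
    omega
  have hb : b < 2 := by
    by_contra! hb
    have : 3 ^ 2 ≤ 3 ^ b := Nat.pow_le_pow_right (by norm_num) hb
    have : 2 ^ c ≤ 2 ^ 2 := Nat.pow_le_pow_right (by norm_num) (by omega)
    omega
  interval_cases b <;> interval_cases c <;> simp_all

theorem two_pow_add_one_eq_three_pow {a d : ℕ} (h : 2 ^ a + 1 = 3 ^ d) :
    a = 1 ∧ d = 1 ∨ a = 3 ∧ d = 2 := by
  have ha : a < 4 := by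
    by_contra! ha
    -- `3 ^ d ≡ 1 [MOD 16]` forces `4 ∣ d`, hence `3 ^ d ≡ 1 [MOD 5]`, which `2 ^ a + 1` never is.
    have := two_pow_mod_eighty ha
    have := three_pow_mod_eighty d
    omega
  have hd : d < 3 := by
    by_contra! hd
    have : 3 ^ 3 ≤ 3 ^ d := Nat.pow_le_pow_right (by norm_num) hd
    have : 2 ^ a ≤ 2 ^ 3 := Nat.pow_le_pow_right (by norm_num) (by omega)
    omega
  interval_cases a <;> interval_cases d <;> simp_all

/-- Gersonides' Theorem (1342): if h and h+1 are both harmonic, then h ∈ {1,2,3,8}. -/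
theorem gersonides (h : ℕ) (hpos : 0 < h) (h1 : IsHarmonic h) (h2 : IsHarmonic (h + 1)) :
    h = 1 ∨ h = 2 ∨ h = 3 ∨ h = 8 := by
  rcases Nat.mod_two_eq_zero_or_one h with heven | hodd
  · obtain ⟨d, hd⟩ := h2.exists_eq_three_pow (by omega)
    have hd0 : d ≠ 0 := by rintro rfl; simp at hd; omega
    have h3 : 3 ∣ h + 1 := hd ▸ dvd_pow_self 3 hd0
    obtain ⟨a, rfl⟩ := h1.exists_eq_two_pow (by omega)
    rcases two_pow_add_one_eq_three_pow hd with ⟨rfl, -⟩ | ⟨rfl, -⟩ <;> norm_num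
  · obtain ⟨b, rfl⟩ := h1.exists_eq_three_pow (by omega)
    rcases b with _ | b
    · simp
    have h3 : 3 ∣ 3 ^ (b + 1) := dvd_pow_self 3 b.succ_ne_zero
    obtain ⟨c, hc⟩ := h2.exists_eq_two_pow (by omega)
    rcases three_pow_add_one_eq_two_pow hc with ⟨hb, -⟩ | ⟨hb, -⟩ <;> simp_all
end

section
/- Each of the numbers 41, 43, 59, 67, 82, 83, 85, 86, 89, 91, and 97 is an ndh-number; that is, none of them can be written as h − k for harmonic numbers h and k. -/
/-- An ndh-number is a positive integer that cannot be written as a difference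
h - k of two harmonic numbers h and k. -/
def IsNdh (n : ℕ) : Prop :=
  0 < n ∧ ¬ ∃ h k : ℕ, IsHarmonic h ∧ IsHarmonic k ∧ n + k = h

lemma pow_cycle (g T M c : ℕ) (h : g ^ T % M = 1 % M) :
    g ^ c % M = g ^ (c % T) % M := by
  conv_lhs => rw [← Nat.div_add_mod c T]
  rw [pow_add, pow_mul, Nat.mul_mod, Nat.pow_mod, h, ← Nat.pow_mod, one_pow,
    ← Nat.mul_mod, one_mul]

lemma mod_ne_A (n M T2 T3 : ℕ) (hT2 : 0 < T2) (hT3 : 0 < T3)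
    (h2 : 2 ^ T2 % M = 1 % M) (h3 : 3 ^ T3 % M = 1 % M)
    (key : ∀ x < T2, ∀ y < T3, (n + 2 ^ x) % M ≠ 3 ^ y % M)
    (c b : ℕ) : n + 2 ^ c ≠ 3 ^ b := by
  intro h
  apply key (c % T2) (Nat.mod_lt _ hT2) (b % T3) (Nat.mod_lt _ hT3)
  rw [Nat.add_mod, ← pow_cycle 2 T2 M c h2, ← Nat.add_mod, h, pow_cycle 3 T3 M b h3]

lemma mod_ne_B (n M T2 T3 : ℕ) (hT2 : 0 < T2) (hT3 : 0 < T3)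
    (h2 : 2 ^ T2 % M = 1 % M) (h3 : 3 ^ T3 % M = 1 % M)
    (key : ∀ y < T3, ∀ x < T2, (n + 3 ^ y) % M ≠ 2 ^ x % M)
    (d a : ℕ) : n + 3 ^ d ≠ 2 ^ a := by
  intro h
  apply key (d % T3) (Nat.mod_lt _ hT3) (a % T2) (Nat.mod_lt _ hT2)
  rw [Nat.add_mod, ← pow_cycle 3 T3 M d h3, ← Nat.add_mod, h, pow_cycle 2 T2 M a h2]

lemma not_harmonic (n p : ℕ) (hp : p.Prime) (hdvd : p ∣ n) (h2 : p ≠ 2) (h3 : p ≠ 3) :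
    ∀ a b : ℕ, n ≠ 2 ^ a * 3 ^ b := by
  rintro a b rfl
  rcases (Nat.Prime.dvd_mul hp).1 hdvd with h | h
  · exact h2 ((Nat.prime_dvd_prime_iff_eq hp Nat.prime_two).1 (hp.dvd_of_dvd_pow h))
  · exact h3 ((Nat.prime_dvd_prime_iff_eq hp Nat.prime_three).1 (hp.dvd_of_dvd_pow h))

lemma odd_case (n : ℕ) (hn2 : n % 2 = 1) (hn3 : n % 3 ≠ 0)
    (h1 : ∀ a b : ℕ, n + 1 ≠ 2 ^ a * 3 ^ b)
    (hA : ∀ c b : ℕ, n + 2 ^ (c + 1) ≠ 3 ^ b)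
    (hB : ∀ d a : ℕ, n + 3 ^ (d + 1) ≠ 2 ^ a) : IsNdh n := by
  refine ⟨by omega, ?_⟩
  rintro ⟨h, k, ⟨a, b, rfl⟩, ⟨c, d, rfl⟩, heq⟩
  match c, a with
  | 0, 0 =>
    simp only [pow_zero, one_mul] at heq
    match d, b with
    | 0, b => exact h1 0 b (by simpa using heq)
    | d + 1, 0 =>
      have := Nat.one_le_pow (d + 1) 3 (by norm_num)
      simp only [pow_zero] at heq; omega
    | d + 1, b + 1 =>
      have hd : 3 ^ (d + 1) % 3 = 0 := by simp [pow_succ, Nat.mul_mod]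
      have hb : 3 ^ (b + 1) % 3 = 0 := by simp [pow_succ, Nat.mul_mod]
      omega
  | 0, a + 1 =>
    simp only [pow_zero, one_mul] at heq
    match d, b with
    | 0, b => exact h1 (a + 1) b (by simpa using heq)
    | d + 1, 0 => exact hB d (a + 1) (by simpa using heq)
    | d + 1, b + 1 =>
      have hd : 3 ^ (d + 1) % 3 = 0 := by simp [pow_succ, Nat.mul_mod]
      have hb : 2 ^ (a + 1) * 3 ^ (b + 1) % 3 = 0 := by
        simp [pow_succ, Nat.mul_mod]
      omega
  | c + 1, 0 =>
    simp only [pow_zero, one_mul] at heq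
    match d, b with
    | 0, b => exact hA c b (by simpa using heq)
    | d + 1, 0 =>
      have := Nat.one_le_pow (c + 1) 2 (by norm_num)
      have := Nat.one_le_pow (d + 1) 3 (by norm_num)
      have h1 : 1 ≤ 2 ^ (c + 1) * 3 ^ (d + 1) := Nat.one_le_iff_ne_zero.2 (by positivity)
      simp only [pow_zero] at heq; omega
    | d + 1, b + 1 =>
      have hd : 2 ^ (c + 1) * 3 ^ (d + 1) % 3 = 0 := by simp [pow_succ, Nat.mul_mod]
      have hb : 3 ^ (b + 1) % 3 = 0 := by simp [pow_succ, Nat.mul_mod]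
      omega
  | c + 1, a + 1 =>
    have hc : 2 ^ (c + 1) * 3 ^ d % 2 = 0 := by simp [pow_succ, Nat.mul_mod]
    have ha : 2 ^ (a + 1) * 3 ^ b % 2 = 0 := by simp [pow_succ, Nat.mul_mod]
    omega

lemma even_case (m : ℕ) (hm : IsNdh m) (h3 : 2 * m % 3 ≠ 0)
    (h1 : ∀ b : ℕ, 2 * m + 1 ≠ 3 ^ b) : IsNdh (2 * m) := by
  refine ⟨by have := hm.1; omega, ?_⟩
  rintro ⟨h, k, ⟨a, b, rfl⟩, ⟨c, d, rfl⟩, heq⟩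
  match c, a with
  | 0, 0 =>
    simp only [pow_zero, one_mul] at heq
    match d, b with
    | 0, b => exact h1 b (by simpa using heq)
    | d + 1, 0 =>
      have := Nat.one_le_pow (d + 1) 3 (by norm_num)
      simp only [pow_zero] at heq; omega
    | d + 1, b + 1 =>
      have hd : 3 ^ (d + 1) % 3 = 0 := by simp [pow_succ, Nat.mul_mod]
      have hb : 3 ^ (b + 1) % 3 = 0 := by simp [pow_succ, Nat.mul_mod]
      omega
  | 0, a + 1 =>
    simp only [pow_zero, one_mul] at heq
    have hd : 3 ^ d % 2 = 1 := by
      rw [Nat.pow_mod]; simp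
    have ha : 2 ^ (a + 1) * 3 ^ b % 2 = 0 := by simp [pow_succ, Nat.mul_mod]
    omega
  | c + 1, 0 =>
    simp only [pow_zero, one_mul] at heq
    have hb : 3 ^ b % 2 = 1 := by rw [Nat.pow_mod]; simp
    have hc : 2 ^ (c + 1) * 3 ^ d % 2 = 0 := by simp [pow_succ, Nat.mul_mod]
    omega
  | c + 1, a + 1 =>
    apply hm.2
    refine ⟨2 ^ a * 3 ^ b, 2 ^ c * 3 ^ d, ⟨a, b, rfl⟩, ⟨c, d, rfl⟩, ?_⟩
    have e1 : 2 ^ (c + 1) * 3 ^ d = 2 * (2 ^ c * 3 ^ d) := by ring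
    have e2 : 2 ^ (a + 1) * 3 ^ b = 2 * (2 ^ a * 3 ^ b) := by ring
    omega

lemma ndh41 : IsNdh 41 := by
  apply odd_case 41 (by norm_num) (by norm_num)
  · exact not_harmonic 42 7 (by norm_num) (by norm_num) (by norm_num) (by norm_num)
  · exact fun c b => mod_ne_A 41 91 12 6 (by norm_num) (by norm_num)
      (by norm_num) (by norm_num) (by decide) (c + 1) b
  · exact fun d a => mod_ne_B 41 91 12 6 (by norm_num) (by norm_num)
      (by norm_num) (by norm_num) (by decide) (d + 1) a

lemma ndh43 : IsNdh 43 := by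
  apply odd_case 43 (by norm_num) (by norm_num)
  · exact not_harmonic 44 11 (by norm_num) (by norm_num) (by norm_num) (by norm_num)
  · exact fun c b => mod_ne_A 43 73 9 12 (by norm_num) (by norm_num)
      (by norm_num) (by norm_num) (by decide) (c + 1) b
  · exact fun d a => mod_ne_B 43 205 20 8 (by norm_num) (by norm_num)
      (by norm_num) (by norm_num) (by decide) (d + 1) a

lemma ndh59 : IsNdh 59 := by
  apply odd_case 59 (by norm_num) (by norm_num)
  · exact not_harmonic 60 5 (by norm_num) (by norm_num) (by norm_num) (by norm_num)
  · exact fun c b => mod_ne_A 59 73 9 12 (by norm_num) (by norm_num)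
      (by norm_num) (by norm_num) (by decide) (c + 1) b
  · exact fun d a => mod_ne_B 59 91 12 6 (by norm_num) (by norm_num)
      (by norm_num) (by norm_num) (by decide) (d + 1) a

lemma ndh67 : IsNdh 67 := by
  apply odd_case 67 (by norm_num) (by norm_num)
  · exact not_harmonic 68 17 (by norm_num) (by norm_num) (by norm_num) (by norm_num)
  · exact fun c b => mod_ne_A 67 85 8 16 (by norm_num) (by norm_num)
      (by norm_num) (by norm_num) (by decide) (c + 1) b
  · exact fun d a => mod_ne_B 67 455 12 12 (by norm_num) (by norm_num)
      (by norm_num) (by norm_num) (by decide) (d + 1) a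

lemma ndh83 : IsNdh 83 := by
  apply odd_case 83 (by norm_num) (by norm_num)
  · exact not_harmonic 84 7 (by norm_num) (by norm_num) (by norm_num) (by norm_num)
  · exact fun c b => mod_ne_A 83 91 12 6 (by norm_num) (by norm_num)
      (by norm_num) (by norm_num) (by decide) (c + 1) b
  · exact fun d a => mod_ne_B 83 455 12 12 (by norm_num) (by norm_num)
      (by norm_num) (by norm_num) (by decide) (d + 1) a

lemma ndh85 : IsNdh 85 := by
  apply odd_case 85 (by norm_num) (by norm_num)
  · exact not_harmonic 86 43 (by norm_num) (by norm_num) (by norm_num) (by norm_num)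
  · exact fun c b => mod_ne_A 85 91 12 6 (by norm_num) (by norm_num)
      (by norm_num) (by norm_num) (by decide) (c + 1) b
  · exact fun d a => mod_ne_B 85 91 12 6 (by norm_num) (by norm_num)
      (by norm_num) (by norm_num) (by decide) (d + 1) a

lemma ndh89 : IsNdh 89 := by
  apply odd_case 89 (by norm_num) (by norm_num)
  · exact not_harmonic 90 5 (by norm_num) (by norm_num) (by norm_num) (by norm_num)
  · exact fun c b => mod_ne_A 89 85 8 16 (by norm_num) (by norm_num)
      (by norm_num) (by norm_num) (by decide) (c + 1) b
  · exact fun d a => mod_ne_B 89 85 8 16 (by norm_num) (by norm_num)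
      (by norm_num) (by norm_num) (by decide) (d + 1) a

lemma ndh91 : IsNdh 91 := by
  apply odd_case 91 (by norm_num) (by norm_num)
  · exact not_harmonic 92 23 (by norm_num) (by norm_num) (by norm_num) (by norm_num)
  · exact fun c b => mod_ne_A 91 259 36 18 (by norm_num) (by norm_num)
      (by norm_num) (by norm_num) (by decide) (c + 1) b
  · exact fun d a => mod_ne_B 91 65 12 12 (by norm_num) (by norm_num)
      (by norm_num) (by norm_num) (by decide) (d + 1) a

lemma ndh97 : IsNdh 97 := by
  apply odd_case 97 (by norm_num) (by norm_num)
  · exact not_harmonic 98 7 (by norm_num) (by norm_num) (by norm_num) (by norm_num)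
  · exact fun c b => mod_ne_A 97 73 9 12 (by norm_num) (by norm_num)
      (by norm_num) (by norm_num) (by decide) (c + 1) b
  · exact fun d a => mod_ne_B 97 91 12 6 (by norm_num) (by norm_num)
      (by norm_num) (by norm_num) (by decide) (d + 1) a

lemma not_pow3 (n : ℕ) (h0 : n ≠ 1) (h1 : n ≠ 3) (h9 : n % 9 ≠ 0) : ∀ b : ℕ, n ≠ 3 ^ b := by
  intro b
  match b with
  | 0 => simpa using h0
  | 1 => simpa using h1
  | b + 2 =>
    have : 3 ^ (b + 2) % 9 = 0 := by
      have : 3 ^ (b + 2) = 3 ^ b * 9 := by ring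
      omega
    omega

lemma ndh82 : IsNdh 82 := by
  have := even_case 41 ndh41 (by norm_num) (not_pow3 83 (by norm_num) (by norm_num) (by norm_num))
  simpa using this

lemma ndh86 : IsNdh 86 := by
  have := even_case 43 ndh43 (by norm_num) (not_pow3 87 (by norm_num) (by norm_num) (by norm_num))
  simpa using this

/-- The numbers 41, 43, 59, 67, 82, 83, 85, 86, 89, 91, 97 are ndh-numbers. -/
theorem ndh_below_100 (n : ℕ)
    (hn : n ∈ ({41, 43, 59, 67, 82, 83, 85, 86, 89, 91, 97} : Set ℕ)) :
    IsNdh n := by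
  simp only [Set.mem_insert_iff, Set.mem_singleton_iff] at hn
  rcases hn with rfl | rfl | rfl | rfl | rfl | rfl | rfl | rfl | rfl | rfl | rfl
  exacts [ndh41, ndh43, ndh59, ndh67, ndh82, ndh83, ndh85, ndh86, ndh89, ndh91, ndh97]
end

section
/- For every nonnegative integer n, the number 2^n·41 is an ndh-number. -/
def ndhL : List ℕ :=
[1, 2, 3, 4, 6, 8, 9, 12, 16, 18, 24, 27, 32, 36, 48, 54, 64, 72, 81, 96, 108, 128, 144, 155, 162, 192, 213, 216, 243, 256, 288, 310, 324, 327, 384, 389, 426, 432, 465, 486, 501, 512, 523, 525, 543, 576, 620, 639, 648, 654, 699, 705, 715, 729, 768, 769, 778, 825, 852, 864, 915, 930, 972, 981, 985, 1002, 1021, 1024, 1046, 1047, 1050, 1059, 1086, 1123, 1152, 1167, 1209, 1240, 1278, 1296, 1307, 1308, 1317, 1365, 1395, 1398, 1403, 1410, 1430, 1458, 1503, 1536, 1538, 1556, 1569, 1575, 1607, 1629, 1650, 1699, 1704, 1728, 1743, 1747, 1797, 1830, 1833, 1849, 1860, 1895, 1917, 1919, 1944, 1962, 1970, 1993, 2004,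 2005, 2042, 2048]

def ndhT : List ℕ := [41, 82, 164, 328, 533, 656, 1066, 1312]

lemma two_red (a : ℕ) : (2:ℕ)^a ≡ 2^(a % 40) [MOD 2091] := by
  conv_lhs => rw [← Nat.div_add_mod a 40]
  rw [pow_add, pow_mul]
  have h : ((2:ℕ)^40) ≡ 1 [MOD 2091] := by decide
  calc ((2:ℕ)^40)^(a/40) * 2^(a%40) ≡ 1^(a/40) * 2^(a%40) [MOD 2091] :=
        (h.pow _).mul_right _
    _ = 2^(a%40) := by rw [one_pow, one_mul]

lemma three_red : ∀ b : ℕ, ∃ b' < 17, (3:ℕ)^b ≡ 3^b' [MOD 2091] := by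
  intro b
  induction b using Nat.strong_induction_on with
  | _ b ih =>
    rcases lt_or_ge b 17 with h | h
    · exact ⟨b, h, Nat.ModEq.refl _⟩
    · obtain ⟨b', hb', he⟩ := ih (b - 16) (by omega)
      refine ⟨b', hb', ?_⟩
      have h17 : (3:ℕ)^17 ≡ 3^1 [MOD 2091] := by decide
      have step : (3:ℕ)^b ≡ 3^(b-16) [MOD 2091] := by
        have := h17.mul_left ((3:ℕ)^(b-17))
        rw [← pow_add, ← pow_add] at this
        rw [show b - 17 + 17 = b by omega, show b - 17 + 1 = b - 16 by omega] at this
        exact this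
      exact step.trans he

lemma memL (a b : ℕ) : (2^a * 3^b) % 2091 ∈ ndhL := by
  obtain ⟨b', hb', h3⟩ := three_red b
  have h2 := two_red a
  have e : (2^a * 3^b) % 2091 = (2^(a % 40) * 3^b') % 2091 := h2.mul h3
  rw [e]
  have key : ∀ a' < 40, ∀ b'' < 17, (2^a' * 3^b'') % 2091 ∈ ndhL := by decide
  exact key _ (Nat.mod_lt _ (by norm_num)) _ hb'

lemma memT (n : ℕ) : (2^n * 41) % 2091 ∈ ndhT := by
  have h2 := two_red n
  have e : (2^n * 41) % 2091 = (2^(n % 40) * 41) % 2091 := h2.mul_right 41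
  rw [e]
  have key : ∀ n' < 40, (2^n' * 41) % 2091 ∈ ndhT := by decide
  exact key _ (Nat.mod_lt _ (by norm_num))

set_option maxRecDepth 8000 in
set_option maxHeartbeats 4000000 in
lemma main_check : ∀ t ∈ ndhT, ∀ x ∈ ndhL, ∀ y ∈ ndhL, (t + x) % 2091 ≠ y := by decide

/-- For every nonnegative integer n, the number 2^n * 41 is an ndh-number. -/
theorem ndh_two_pow_mul_41 (n : ℕ) : IsNdh (2 ^ n * 41) := by
  constructor
  · positivity
  · rintro ⟨h, k, ⟨c, d, rfl⟩, ⟨a, b, rfl⟩, heq⟩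
    have e : ((2^n * 41) % 2091 + (2^a * 3^b) % 2091) % 2091 = (2^c * 3^d) % 2091 := by
      rw [← Nat.add_mod, heq]
    exact main_check _ (memT n) _ (memL a b) _ (memL c d) e
end

section
/- For every nonnegative integer n, the number 3^n·41 is an ndh-number. -/
lemma three_pow_mod8 (k : ℕ) : (3 : ZMod 8) ^ k = 1 ∨ (3 : ZMod 8) ^ k = 3 := by
  induction k with
  | zero => left; rfl
  | succ k ih => rcases ih with h | h <;> rw [pow_succ, h] <;> decide

lemma two_pow_mod60 (c : ℕ) : (2 : ZMod 60) ^ c = 1 ∨ (2 : ZMod 60) ^ c = 2 ∨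
    (2 : ZMod 60) ^ c = 4 ∨ (2 : ZMod 60) ^ c = 8 ∨ (2 : ZMod 60) ^ c = 16 ∨
    (2 : ZMod 60) ^ c = 32 := by
  induction c with
  | zero => left; rfl
  | succ c ih =>
    rcases ih with h | h | h | h | h | h <;> rw [pow_succ, h] <;> decide

lemma three_pow_mod60 (b : ℕ) : (3 : ZMod 60) ^ b = 1 ∨ (3 : ZMod 60) ^ b = 3 ∨
    (3 : ZMod 60) ^ b = 9 ∨ (3 : ZMod 60) ^ b = 27 ∨ (3 : ZMod 60) ^ b = 21 := by
  induction b with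
  | zero => left; rfl
  | succ b ih =>
    rcases ih with h | h | h | h | h <;> rw [pow_succ, h] <;> decide

/-- 41 + 2^c = 3^b has no solutions (mod 60 argument). -/
lemma no41 (c b : ℕ) (h : 41 + 2 ^ c = 3 ^ b) : False := by
  have e := congrArg (Nat.cast : ℕ → ZMod 60) h
  push_cast at e
  rcases two_pow_mod60 c with h2 | h2 | h2 | h2 | h2 | h2 <;>
    rcases three_pow_mod60 b with h3 | h3 | h3 | h3 | h3 <;>
      rw [h2, h3] at e <;> exact absurd e (by decide)

instance : Fact (Nat.Prime 7) := ⟨by norm_num⟩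

/-- The key impossibility. -/
lemma key : ∀ n a b c d : ℕ, 3 ^ n * 41 + 2 ^ c * 3 ^ d = 2 ^ a * 3 ^ b → False := by
  intro n
  induction n with
  | zero =>
    intro a b c d h
    simp only [pow_zero, one_mul] at h
    -- parity : a = 0 ∨ c = 0
    have hpar : a = 0 ∨ c = 0 := by
      by_contra hc
      push_neg at hc
      obtain ⟨ha, hcc⟩ := hc
      have e := congrArg (Nat.cast : ℕ → ZMod 2) h
      push_cast at e
      rw [show (2 : ZMod 2) = 0 by decide, zero_pow ha, zero_pow hcc] at e
      rw [show (3 : ZMod 2) = 1 by decide] at e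
      simp at e
      exact absurd e (by decide)
    have hpos2 : 0 < 2 ^ c * 3 ^ d := by positivity
    rcases hpar with rfl | rfl
    · simp only [pow_zero, one_mul] at h
      -- 41 + 2^c*3^d = 3^b
      have hb : b ≠ 0 := by
        rintro rfl
        simp at h
        omega
      rcases Nat.eq_zero_or_pos d with rfl | hd
      · simp only [pow_zero, mul_one] at h
        exact no41 c b h
      · -- mod 3 : 41 + 0 = 0
        have e := congrArg (Nat.cast : ℕ → ZMod 3) h
        push_cast at e
        rw [show (3 : ZMod 3) = 0 by decide, zero_pow (by omega : d ≠ 0),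
          zero_pow hb] at e
        simp at e
        exact absurd e (by decide)
    · simp only [pow_zero, one_mul] at h
      -- 41 + 3^d = 2^a*3^b
      rcases Nat.eq_zero_or_pos b with rfl | hb
      · simp only [pow_zero, mul_one] at h
        -- 41 + 3^d = 2^a ; mod 8
        have hd3 : 0 < 3 ^ d := by positivity
        have ha3 : 3 ≤ a := by
          rcases Nat.lt_or_ge a 3 with hlt | hge
          · exfalso
            have h4 : 2 ^ a ≤ 2 ^ 2 := Nat.pow_le_pow_right (by norm_num) (by omega)
            have h5 : (2 : ℕ) ^ 2 = 4 := by norm_num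
            omega
          · exact hge
        have e := congrArg (Nat.cast : ℕ → ZMod 8) h
        push_cast at e
        rw [show a = 3 + (a - 3) by omega, pow_add (2 : ZMod 8) 3 (a - 3),
          show (2 : ZMod 8) ^ 3 = 0 by decide, zero_mul] at e
        rcases three_pow_mod8 d with h3 | h3 <;> rw [h3] at e <;>
          exact absurd e (by decide)
      · rcases Nat.eq_zero_or_pos d with rfl | hd
        · simp only [pow_zero, add_comm] at h
          -- 42 = 2^a * 3^b ; mod 7
          have e := congrArg (Nat.cast : ℕ → ZMod 7) h.symm
          push_cast at e
          have h2' : (2 : ZMod 7) ≠ 0 := by decide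
          have h3' : (3 : ZMod 7) ≠ 0 := by decide
          have hne : (2 : ZMod 7) ^ a * (3 : ZMod 7) ^ b ≠ 0 :=
            mul_ne_zero (pow_ne_zero _ h2') (pow_ne_zero _ h3')
          rw [e] at hne
          exact hne (by decide)
        · -- mod 3 : 2 + 0 = 0
          have e := congrArg (Nat.cast : ℕ → ZMod 3) h
          push_cast at e
          rw [show (3 : ZMod 3) = 0 by decide, zero_pow (by omega : d ≠ 0),
            zero_pow (by omega : b ≠ 0)] at e
          simp only [zero_mul, mul_zero, zero_add] at e
          exact absurd e (by decide)
  | succ n ih =>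
    intro a b c d h
    have hpar : a = 0 ∨ c = 0 := by
      by_contra hc
      push_neg at hc
      obtain ⟨ha, hcc⟩ := hc
      have e := congrArg (Nat.cast : ℕ → ZMod 2) h
      push_cast at e
      rw [show (2 : ZMod 2) = 0 by decide, zero_pow ha, zero_pow hcc] at e
      rw [show (3 : ZMod 2) = 1 by decide] at e
      simp at e
      exact absurd e (by decide)
    rcases Nat.eq_zero_or_pos d with rfl | hd
    · simp only [pow_zero, mul_one] at h
      rcases hpar with rfl | rfl
      · simp only [pow_zero, one_mul] at h
        -- 3^(n+1)*41 + 2^c = 3^b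
        have hb : b ≠ 0 := by
          rintro rfl
          have h1 : 0 < 2 ^ c := by positivity
          have h2 : 0 < 3 ^ (n + 1) := by positivity
          simp only [pow_zero] at h
          omega
        have e := congrArg (Nat.cast : ℕ → ZMod 3) h
        push_cast at e
        rw [show (3 : ZMod 3) = 0 by decide, zero_pow (Nat.succ_ne_zero n),
          zero_pow hb] at e
        simp only [zero_mul, zero_add] at e
        exact pow_ne_zero c (show (2 : ZMod 3) ≠ 0 by decide) e
      · simp only [pow_zero, one_mul] at h
        -- 3^(n+1)*41 + 1 = 2^a*3^b
        rcases Nat.eq_zero_or_pos b with rfl | hb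
        · simp only [pow_zero, mul_one] at h
          -- 3^(n+1)*41 + 1 = 2^a ; mod 8
          have h2 : 3 ^ 1 ≤ 3 ^ (n + 1) := Nat.pow_le_pow_right (by norm_num) (by omega)
          have ha3 : 3 ≤ a := by
            rcases Nat.lt_or_ge a 3 with hlt | hge
            · exfalso
              have h4 : 2 ^ a ≤ 2 ^ 2 := Nat.pow_le_pow_right (by norm_num) (by omega)
              have h5 : (2 : ℕ) ^ 2 = 4 := by norm_num
              omega
            · exact hge
          have e := congrArg (Nat.cast : ℕ → ZMod 8) h
          push_cast at e
          rw [show a = 3 + (a - 3) by omega, pow_add (2 : ZMod 8) 3 (a - 3),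
            show (2 : ZMod 8) ^ 3 = 0 by decide, zero_mul] at e
          rcases three_pow_mod8 (n + 1) with h3 | h3 <;> rw [h3] at e <;>
            exact absurd e (by decide)
        · have e := congrArg (Nat.cast : ℕ → ZMod 3) h
          push_cast at e
          rw [show (3 : ZMod 3) = 0 by decide, zero_pow (Nat.succ_ne_zero n),
            zero_pow (by omega : b ≠ 0)] at e
          simp only [zero_mul, mul_zero, zero_add] at e
          exact absurd e (by decide)
    · rcases Nat.eq_zero_or_pos b with rfl | hb
      · simp only [pow_zero, mul_one] at h
        -- 3^(n+1)*41 + 2^c*3^d = 2^a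
        rcases hpar with rfl | rfl
        · simp only [pow_zero] at h
          have h1 : 0 < 2 ^ c * 3 ^ d := by positivity
          have h2 : 0 < 3 ^ (n + 1) := by positivity
          omega
        · have e := congrArg (Nat.cast : ℕ → ZMod 3) h
          push_cast at e
          rw [show (3 : ZMod 3) = 0 by decide, zero_pow (Nat.succ_ne_zero n),
            zero_pow (by omega : d ≠ 0)] at e
          simp only [one_pow, one_mul, zero_mul, mul_zero, zero_add, add_zero] at e
          exact pow_ne_zero a (show (2 : ZMod 3) ≠ 0 by decide) e.symm
      · -- divide by 3
        apply ih a (b - 1) c (d - 1)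
        have h3 : (3 ^ n * 41 + 2 ^ c * 3 ^ (d - 1)) * 3 = (2 ^ a * 3 ^ (b - 1)) * 3 := by
          rw [show d = (d - 1) + 1 by omega, show b = (b - 1) + 1 by omega,
            pow_succ, pow_succ, pow_succ] at h
          ring_nf
          ring_nf at h
          linarith
        exact Nat.eq_of_mul_eq_mul_right (by norm_num) h3

/-- For every nonnegative integer n, the number 3^n * 41 is an ndh-number. -/
theorem ndh_three_pow_mul_41 (n : ℕ) : IsNdh (3 ^ n * 41) := by
  constructor
  · positivity
  · rintro ⟨h, k, ⟨a, b, rfl⟩, ⟨c, d, rfl⟩, heq⟩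
    exact key n a b c d heq
end

section
/- There exist infinitely many ndh-numbers; that is, the set of positive integers that cannot be written as a difference of two harmonic numbers is infinite. -/
set_option maxRecDepth 10000

/-- The residues mod 6553 of numbers of the form 2^a * 3^b: the multiplicative
subgroup of (ℤ/6553)ˣ generated by 2 and 3, which has 117 elements. -/
def Slist : List ℕ :=
  [1, 2, 3, 4, 6, 8, 9, 12, 16, 18, 24, 27, 32, 36, 48, 54, 64, 72, 81, 96, 108, 128, 144, 162, 192, 216, 243, 256, 288, 324, 359, 384, 432, 486, 512, 576, 648, 718, 729, 768, 785, 864, 972, 1024, 1077, 1152, 1223, 1296, 1436, 1458, 1536, 1570, 1639, 1645, 1699, 1728, 1944, 2048, 2063, 2154, 2185, 2187, 2195, 2227, 2304, 2355, 2446, 2592, 2663, 2867, 2872, 2916, 3072, 3140, 3231, 3277, 3278, 3281, 3290, 3317, 3398, 3456, 3641, 3669, 3815, 3888, 4096, 4099, 4126, 4308, 4369, 4370, 4374, 4390, 4454, 4608, 4710, 4892, 4915, 4917, 4935, 5097, 5111, 5184, 5326, 5461, 5734, 5735, 5744, 5825, 5832, 6007, 6144, 6189, 6280, 6371, 6462]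

lemma one_mem_Slist : (1 : ℕ) ∈ Slist := by decide

lemma mul2_mem_Slist : ∀ x ∈ Slist, (2 * x) % 6553 ∈ Slist := by decide

lemma mul3_mem_Slist : ∀ x ∈ Slist, (3 * x) % 6553 ∈ Slist := by decide

lemma no_diff_113 : ∀ x ∈ Slist, ∀ y ∈ Slist, (113 + y) % 6553 ≠ x := by decide

lemma mulmod (g x : ℕ) : (g * (x % 6553)) % 6553 = (g * x) % 6553 := by
  conv_rhs => rw [Nat.mul_mod]
  conv_lhs => rw [Nat.mul_mod, Nat.mod_mod]

lemma powmod_mem (a b : ℕ) : (2 ^ a * 3 ^ b) % 6553 ∈ Slist := by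
  induction a with
  | zero =>
    induction b with
    | zero => simpa using one_mem_Slist
    | succ b ih =>
      have h3 := mul3_mem_Slist _ ih
      rw [mulmod] at h3
      have e : (2 : ℕ) ^ 0 * 3 ^ (b + 1) = 3 * (2 ^ 0 * 3 ^ b) := by ring
      rw [e]; exact h3
  | succ a ih =>
    have h2 := mul2_mem_Slist _ ih
    rw [mulmod] at h2
    have e : (2 : ℕ) ^ (a + 1) * 3 ^ b = 2 * (2 ^ a * 3 ^ b) := by ring
    rw [e]; exact h2

lemma ndh_of_form (m : ℕ) : IsNdh (6553 * m + 113) := by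
  constructor
  · omega
  · rintro ⟨h, k, ⟨a, b, rfl⟩, ⟨c, d, rfl⟩, heq⟩
    have hx := powmod_mem a b
    have hy := powmod_mem c d
    have key : (113 + (2 ^ c * 3 ^ d) % 6553) % 6553 = (2 ^ a * 3 ^ b) % 6553 := by
      omega
    exact no_diff_113 _ hx _ hy key

/-- There are infinitely many ndh-numbers. -/
theorem ndh_infinite : {n : ℕ | IsNdh n}.Infinite := by
  apply Set.infinite_of_injective_forall_mem (f := fun m : ℕ => 6553 * m + 113)
  case hi =>
    intro x y hxy
    simp only at hxy
    omega
  case hf =>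
    intro m
    exact ndh_of_form m
end

section
/- It is not true that x being an ndh-number implies 2x is an ndh-number: 91 is an ndh-number, yet 2^3·91 = 728 = 3^6 − 1 is a difference of harmonic numbers. Likewise, it is not true that x being an ndh-number implies 3x is an ndh-number: 85 is an ndh-number, yet 3·85 = 255 = 2^8 − 1 is a difference of harmonic numbers. -/
set_option maxRecDepth 40000 in
lemma pow2_mem : ∀ a : ℕ, (2 : ZMod 240) ^ a ∈
    ({1, 2, 4, 8, 16, 32, 64, 128} : Finset (ZMod 240)) := by
  intro a
  induction a with
  | zero => decide
  | succ n ih =>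
    rw [pow_succ]
    revert ih
    generalize (2 : ZMod 240) ^ n = x
    revert x
    decide

set_option maxRecDepth 40000 in
lemma pow3_mem : ∀ b : ℕ, (3 : ZMod 240) ^ b ∈
    ({1, 3, 9, 27, 81} : Finset (ZMod 240)) := by
  intro b
  induction b with
  | zero => decide
  | succ n ih =>
    rw [pow_succ]
    revert ih
    generalize (3 : ZMod 240) ^ n = x
    revert x
    decide

set_option maxRecDepth 100000 in
set_option maxHeartbeats 2000000 in
lemma key_s9 : ∀ x ∈ ({1, 2, 4, 8, 16, 32, 64, 128} : Finset (ZMod 240)),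
    ∀ y ∈ ({1, 3, 9, 27, 81} : Finset (ZMod 240)),
    ∀ x' ∈ ({1, 2, 4, 8, 16, 32, 64, 128} : Finset (ZMod 240)),
    ∀ y' ∈ ({1, 3, 9, 27, 81} : Finset (ZMod 240)),
    x * y ≠ x' * y' + 91 ∧ x * y ≠ x' * y' + 85 := by decide

lemma no_diff (n : ℕ) (hn : (n : ZMod 240) = 91 ∨ (n : ZMod 240) = 85) :
    ¬ ∃ h k : ℕ, IsHarmonic h ∧ IsHarmonic k ∧ n + k = h := by
  rintro ⟨h, k, ⟨a, b, rfl⟩, ⟨c, d, rfl⟩, heq⟩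
  have := congrArg (Nat.cast : ℕ → ZMod 240) heq
  push_cast at this
  have hk := key_s9 _ (pow2_mem a) _ (pow3_mem b) _ (pow2_mem c) _ (pow3_mem d)
  rcases hn with h91 | h85
  · exact hk.1 (by rw [← this, h91, add_comm])
  · exact hk.2 (by rw [← this, h85, add_comm])

/-- It is not true that x ndh implies 2x ndh: 91 is ndh yet 2^3 * 91 = 728 = 3^6 - 1
is a difference of harmonic numbers. Likewise it is not true that x ndh implies
3x ndh: 85 is ndh yet 3 * 85 = 255 = 2^8 - 1 is a difference of harmonic numbers. -/
theorem ndh_not_closed_under_doubling_or_tripling :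
    IsNdh 91 ∧ (∃ h k : ℕ, IsHarmonic h ∧ IsHarmonic k ∧ 2 ^ 3 * 91 + k = h) ∧
    ¬(∀ x : ℕ, IsNdh x → IsNdh (2 * x)) ∧
    IsNdh 85 ∧ (∃ h k : ℕ, IsHarmonic h ∧ IsHarmonic k ∧ 3 * 85 + k = h) ∧
    ¬(∀ x : ℕ, IsNdh x → IsNdh (3 * x)) := by
  have h91 : IsNdh 91 := ⟨by norm_num, no_diff 91 (Or.inl (by decide))⟩
  have h85 : IsNdh 85 := ⟨by norm_num, no_diff 85 (Or.inr (by decide))⟩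
  have e728 : (∃ h k : ℕ, IsHarmonic h ∧ IsHarmonic k ∧ 2 ^ 3 * 91 + k = h) :=
    ⟨729, 1, ⟨0, 6, by norm_num⟩, ⟨0, 0, by norm_num⟩, by norm_num⟩
  have e255 : (∃ h k : ℕ, IsHarmonic h ∧ IsHarmonic k ∧ 3 * 85 + k = h) :=
    ⟨256, 1, ⟨8, 0, by norm_num⟩, ⟨0, 0, by norm_num⟩, by norm_num⟩
  refine ⟨h91, e728, ?_, h85, e255, ?_⟩
  · intro hall
    have h182 := hall 91 h91
    have h364 := hall 182 h182
    have h728 := hall 364 h364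
    exact h728.2 (by norm_num at e728 ⊢; exact e728)
  · intro hall
    have h255 := hall 85 h85
    exact h255.2 (by norm_num at e255 ⊢; exact e255)
end

section
/- The only ways to write 3 as a difference h − k of harmonic numbers h and k are: 4 − 1, 6 − 3, 9 − 6, 12 − 9, and 27 − 24. -/
lemma pow_mod_cycle (x p m n : ℕ) (h : x ^ p % m = 1 % m) :
    x ^ n % m = x ^ (n % p) % m := by
  conv_lhs => rw [← Nat.div_add_mod n p]
  rw [pow_add, pow_mul, Nat.mul_mod, Nat.pow_mod, h, ← Nat.pow_mod, one_pow,
    ← Nat.mul_mod, one_mul]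

-- 3^b = 2^c + 1
lemma eq1 (b c : ℕ) (h : 3 ^ b = 2 ^ c + 1) : (b = 1 ∧ c = 1) ∨ (b = 2 ∧ c = 3) := by
  have hb1 : (1:ℕ) ≤ 3 ^ b := Nat.one_le_pow _ _ (by norm_num)
  rcases Nat.lt_or_ge c 4 with hc | hc
  · interval_cases c
    · exfalso
      rcases b with _ | _ | b
      · omega
      · omega
      · have : 3 ^ (b + 2) = 9 * 3 ^ b := by ring
        have : (1:ℕ) ≤ 3 ^ b := Nat.one_le_pow _ _ (by norm_num)
        omega
    · left
      have : (3:ℕ) ^ b = 3 ^ 1 := by omega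
      exact ⟨Nat.pow_right_injective (by norm_num) this, rfl⟩
    · exfalso
      rcases b with _ | _ | b
      · omega
      · omega
      · have : 3 ^ (b + 2) = 9 * 3 ^ b := by ring
        have : (1:ℕ) ≤ 3 ^ b := Nat.one_le_pow _ _ (by norm_num)
        omega
    · right
      have : (3:ℕ) ^ b = 3 ^ 2 := by omega
      exact ⟨Nat.pow_right_injective (by norm_num) this, rfl⟩
  · exfalso
    have h16 : 3 ^ b % 16 = 3 ^ (b % 4) % 16 := pow_mod_cycle 3 4 16 b (by norm_num)
    have h2 : (16:ℕ) ∣ 2 ^ c := by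
      calc (16:ℕ) = 2 ^ 4 := by norm_num
        _ ∣ 2 ^ c := pow_dvd_pow 2 hc
    have hb4 : b % 4 = 0 := by
      obtain ⟨r, hr, hrb⟩ : ∃ r, r < 4 ∧ b % 4 = r := ⟨b % 4, Nat.mod_lt _ (by norm_num), rfl⟩
      rw [hrb] at h16
      interval_cases r <;> omega
    -- mod 5
    have h5 : 3 ^ b % 5 = 3 ^ (b % 4) % 5 := pow_mod_cycle 3 4 5 b (by norm_num)
    rw [hb4] at h5
    have h25 : 2 ^ c % 5 = 2 ^ (c % 4) % 5 := pow_mod_cycle 2 4 5 c (by norm_num)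
    obtain ⟨r, hr, hrb⟩ : ∃ r, r < 4 ∧ c % 4 = r := ⟨c % 4, Nat.mod_lt _ (by norm_num), rfl⟩
    rw [hrb] at h25
    interval_cases r <;> omega

-- 2^a = 3^d + 1
lemma eq2 (a d : ℕ) (h : 2 ^ a = 3 ^ d + 1) : (a = 1 ∧ d = 0) ∨ (a = 2 ∧ d = 1) := by
  have hd1 : (1:ℕ) ≤ 3 ^ d := Nat.one_le_pow _ _ (by norm_num)
  rcases Nat.lt_or_ge a 3 with ha | ha
  · interval_cases a
    · omega
    · left
      refine ⟨rfl, ?_⟩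
      rcases d with _ | d
      · rfl
      · exfalso
        have : 3 ^ (d + 1) = 3 * 3 ^ d := by ring
        have : (1:ℕ) ≤ 3 ^ d := Nat.one_le_pow _ _ (by norm_num)
        omega
    · right
      refine ⟨rfl, ?_⟩
      have : (3:ℕ) ^ d = 3 ^ 1 := by omega
      exact Nat.pow_right_injective (by norm_num) this
  · exfalso
    have h2 : (8:ℕ) ∣ 2 ^ a := by
      calc (8:ℕ) = 2 ^ 3 := by norm_num
        _ ∣ 2 ^ a := pow_dvd_pow 2 ha
    have h8 : 3 ^ d % 8 = 3 ^ (d % 2) % 8 := pow_mod_cycle 3 2 8 d (by norm_num)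
    obtain ⟨r, hr, hrb⟩ : ∃ r, r < 2 ∧ d % 2 = r := ⟨d % 2, Nat.mod_lt _ (by norm_num), rfl⟩
    rw [hrb] at h8
    interval_cases r <;> omega

lemma consec (a b c d : ℕ) (h : 2 ^ a * 3 ^ b = 2 ^ c * 3 ^ d + 1) :
    (a = 1 ∧ b = 0 ∧ c = 0 ∧ d = 0) ∨ (a = 0 ∧ b = 1 ∧ c = 1 ∧ d = 0) ∨
    (a = 2 ∧ b = 0 ∧ c = 0 ∧ d = 1) ∨ (a = 0 ∧ b = 2 ∧ c = 3 ∧ d = 0) := by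
  rcases a with _ | a
  · simp only [pow_zero, one_mul] at h
    rcases d with _ | d
    · simp only [pow_zero, mul_one] at h
      rcases eq1 b c h with ⟨hb, hc⟩ | ⟨hb, hc⟩
      · exact Or.inr (Or.inl ⟨rfl, hb, hc, rfl⟩)
      · exact Or.inr (Or.inr (Or.inr ⟨rfl, hb, hc, rfl⟩))
    · exfalso
      rcases b with _ | b
      · have : (1:ℕ) ≤ 2 ^ c * 3 ^ (d + 1) :=
          Nat.one_le_iff_ne_zero.mpr (by positivity)
        omega
      · have h1 : (3:ℕ) ∣ 3 ^ (b + 1) := ⟨3 ^ b, by ring⟩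
        have h2 : (3:ℕ) ∣ 2 ^ c * 3 ^ (d + 1) := ⟨2 ^ c * 3 ^ d, by ring⟩
        omega
  · rcases c with _ | c
    · simp only [pow_zero, one_mul] at h
      rcases b with _ | b
      · simp only [pow_zero, mul_one] at h
        rcases eq2 (a + 1) d h with ⟨ha, hd⟩ | ⟨ha, hd⟩
        · exact Or.inl ⟨ha, rfl, rfl, hd⟩
        · exact Or.inr (Or.inr (Or.inl ⟨ha, rfl, rfl, hd⟩))
      · exfalso
        rcases d with _ | d
        · -- 2^(a+1)*3^(b+1) = 2, but LHS ≥ 6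
          simp only [pow_zero] at h
          have h1 : (2:ℕ) ≤ 2 ^ (a + 1) := Nat.one_lt_two_pow (by omega)
          have h2 : (3:ℕ) ≤ 3 ^ (b + 1) := by
            calc (3:ℕ) = 3 ^ 1 := rfl
              _ ≤ 3 ^ (b + 1) := Nat.pow_le_pow_right (by norm_num) (by omega)
          nlinarith
        · have h1 : (3:ℕ) ∣ 2 ^ (a + 1) * 3 ^ (b + 1) := ⟨2 ^ (a + 1) * 3 ^ b, by ring⟩
          have h2 : (3:ℕ) ∣ 3 ^ (d + 1) := ⟨3 ^ d, by ring⟩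
          omega
    · exfalso
      have h1 : (2:ℕ) ∣ 2 ^ (a + 1) * 3 ^ b := ⟨2 ^ a * 3 ^ b, by ring⟩
      have h2 : (2:ℕ) ∣ 2 ^ (c + 1) * 3 ^ d := ⟨2 ^ c * 3 ^ d, by ring⟩
      omega

/-- The only ways to write 3 as a difference of harmonic numbers are
4 - 1, 6 - 3, 9 - 6, 12 - 9, and 27 - 24. -/
theorem three_as_difference (h k : ℕ) (hh : IsHarmonic h) (hk : IsHarmonic k)
    (hdiff : 3 + k = h) :
    (h = 4 ∧ k = 1) ∨ (h = 6 ∧ k = 3) ∨ (h = 9 ∧ k = 6) ∨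
    (h = 12 ∧ k = 9) ∨ (h = 27 ∧ k = 24) := by
  obtain ⟨a, b, rfl⟩ := hh
  obtain ⟨c, d, rfl⟩ := hk
  rcases b with _ | b
  · rcases d with _ | d
    · -- 3 + 2^c = 2^a
      simp only [pow_zero, mul_one] at hdiff ⊢
      have hc : c = 0 := by
        by_contra hc
        have h1 : (2:ℕ) ∣ 2 ^ c := dvd_pow_self 2 hc
        have ha : a ≠ 0 := by
          rintro rfl
          have : (1:ℕ) ≤ 2 ^ c := Nat.one_le_pow _ _ (by norm_num)
          simp at hdiff
          omega
        have h2 : (2:ℕ) ∣ 2 ^ a := dvd_pow_self 2 ha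
        omega
      subst hc
      have : (2:ℕ) ^ a = 2 ^ 2 := by norm_num at hdiff ⊢; omega
      have ha : a = 2 := Nat.pow_right_injective (by norm_num) this
      subst ha
      left
      norm_num
    · -- b = 0, d = d+1
      exfalso
      simp only [pow_zero, mul_one] at hdiff
      have h1 : (3:ℕ) ∣ 2 ^ c * 3 ^ (d + 1) := ⟨2 ^ c * 3 ^ d, by ring⟩
      have h2 : ¬ (3:ℕ) ∣ 2 ^ a := by
        intro hdvd
        have := Nat.Prime.dvd_of_dvd_pow Nat.prime_three hdvd
        omega
      rcases h2 (by omega)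
  · rcases d with _ | d
    · exfalso
      simp only [pow_zero, mul_one] at hdiff
      have h1 : (3:ℕ) ∣ 2 ^ a * 3 ^ (b + 1) := ⟨2 ^ a * 3 ^ b, by ring⟩
      have h2 : ¬ (3:ℕ) ∣ 2 ^ c := by
        intro hdvd
        have := Nat.Prime.dvd_of_dvd_pow Nat.prime_three hdvd
        omega
      rcases h2 (by omega)
    · -- both divisible by 3: cancel
      have key : 2 ^ a * 3 ^ b = 2 ^ c * 3 ^ d + 1 := by
        have e1 : 2 ^ a * 3 ^ (b + 1) = 3 * (2 ^ a * 3 ^ b) := by ring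
        have e2 : 2 ^ c * 3 ^ (d + 1) = 3 * (2 ^ c * 3 ^ d) := by ring
        omega
      rcases consec a b c d key with ⟨ha, hb, hc, hd⟩ | ⟨ha, hb, hc, hd⟩ |
        ⟨ha, hb, hc, hd⟩ | ⟨ha, hb, hc, hd⟩ <;> subst ha <;> subst hb <;> subst hc <;>
        subst hd <;> norm_num
end

section
/- The only ways to write 5 as a difference h − k of harmonic numbers h and k are: 6 − 1, 9 − 4, 8 − 3, and 32 − 27. -/
lemma pow_mod_eq' (x m p n : ℕ) (hm : 1 < m) (h : x ^ p % m = 1) :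
    x ^ n % m = x ^ (n % p) % m := by
  conv_lhs => rw [← Nat.div_add_mod n p]
  rw [pow_add, pow_mul, Nat.mul_mod, Nat.pow_mod, h, one_pow,
    Nat.one_mod_eq_one.mpr (by omega), one_mul, Nat.mod_mod_of_dvd _ dvd_rfl]

/-- solutions of 5 + 2^c = 3^b -/
lemma aux1 (b c : ℕ) (E : 5 + 2 ^ c = 3 ^ b) : b = 2 ∧ c = 2 := by
  have hc : c ≤ 2 := by
    by_contra hc
    push_neg at hc
    have h8 : (8 : ℕ) ∣ 2 ^ c := by
      calc (8:ℕ) = 2 ^ 3 := by norm_num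
      _ ∣ 2 ^ c := pow_dvd_pow 2 hc
    have h3 : 3 ^ b % 8 = 3 ^ (b % 2) % 8 := pow_mod_eq' 3 8 2 b (by norm_num) (by norm_num)
    have hb2 : b % 2 < 2 := Nat.mod_lt _ (by norm_num)
    interval_cases (b % 2) <;> omega
  have hc4 : (2:ℕ) ^ c ≤ 4 := by
    calc (2:ℕ) ^ c ≤ 2 ^ 2 := Nat.pow_le_pow_right (by norm_num) hc
    _ = 4 := by norm_num
  have hb : b ≤ 2 := by
    by_contra hb
    push_neg at hb
    have h27 : (27:ℕ) ≤ 3 ^ b := by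
      calc (27:ℕ) = 3 ^ 3 := by norm_num
      _ ≤ 3 ^ b := Nat.pow_le_pow_right (by norm_num) hb
    omega
  interval_cases b <;> interval_cases c <;> omega

/-- solutions of 5 + 3^d = 2^a -/
lemma aux2 (a d : ℕ) (E : 5 + 3 ^ d = 2 ^ a) : (a = 3 ∧ d = 1) ∨ (a = 5 ∧ d = 3) := by
  have ha : a ≤ 5 := by
    by_contra ha
    push_neg at ha
    have h64 : (64 : ℕ) ∣ 2 ^ a := by
      calc (64:ℕ) = 2 ^ 6 := by norm_num
      _ ∣ 2 ^ a := pow_dvd_pow 2 ha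
    -- 3^d ≡ 59 mod 64
    have h3 : 3 ^ d % 64 = 3 ^ (d % 16) % 64 := pow_mod_eq' 3 64 16 d (by norm_num) (by norm_num)
    have hd59 : 3 ^ d % 64 = 59 := by omega
    have hd16 : d % 16 < 16 := Nat.mod_lt _ (by norm_num)
    have hd11 : d % 16 = 11 := by
      rw [h3] at hd59
      interval_cases (d % 16) <;> omega
    -- hence 3^d % 17 = 7
    have h17 : 3 ^ d % 17 = 3 ^ (d % 16) % 17 := pow_mod_eq' 3 17 16 d (by norm_num) (by norm_num)
    rw [hd11] at h17
    norm_num at h17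
    -- so 2^a % 17 = 12, impossible
    have h2 : 2 ^ a % 17 = 2 ^ (a % 8) % 17 := pow_mod_eq' 2 17 8 a (by norm_num) (by norm_num)
    have ha8 : a % 8 < 8 := Nat.mod_lt _ (by norm_num)
    interval_cases (a % 8) <;> omega
  have hd : d ≤ 3 := by
    by_contra hd
    push_neg at hd
    have h81 : (81 : ℕ) ≤ 3 ^ d := by
      calc (81:ℕ) = 3 ^ 4 := by norm_num
      _ ≤ 3 ^ d := Nat.pow_le_pow_right (by norm_num) hd
    have h32 : (2:ℕ) ^ a ≤ 2 ^ 5 := Nat.pow_le_pow_right (by norm_num) ha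
    norm_num at h32
    omega
  interval_cases a <;> interval_cases d <;> omega

/-- The only ways to write 5 as a difference of harmonic numbers are
6 - 1, 9 - 4, 8 - 3, and 32 - 27. -/
theorem five_as_difference (h k : ℕ) (hh : IsHarmonic h) (hk : IsHarmonic k)
    (hdiff : 5 + k = h) :
    (h = 6 ∧ k = 1) ∨ (h = 9 ∧ k = 4) ∨ (h = 8 ∧ k = 3) ∨ (h = 32 ∧ k = 27) := by
  obtain ⟨a, b, rfl⟩ := hh
  obtain ⟨c, d, rfl⟩ := hk
  have hac : a = 0 ∨ c = 0 := by
    by_contra hac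
    push_neg at hac
    have h1 : (2:ℕ) ∣ 2 ^ a := dvd_pow_self 2 hac.1
    have h2 : (2:ℕ) ∣ 2 ^ c := dvd_pow_self 2 hac.2
    have d1 : (2:ℕ) ∣ 2 ^ a * 3 ^ b := h1.mul_right _
    have d2 : (2:ℕ) ∣ 2 ^ c * 3 ^ d := h2.mul_right _
    omega
  have hbd : b = 0 ∨ d = 0 := by
    by_contra hbd
    push_neg at hbd
    have h1 : (3:ℕ) ∣ 3 ^ b := dvd_pow_self 3 hbd.1
    have h2 : (3:ℕ) ∣ 3 ^ d := dvd_pow_self 3 hbd.2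
    have d1 : (3:ℕ) ∣ 2 ^ a * 3 ^ b := h1.mul_left _
    have d2 : (3:ℕ) ∣ 2 ^ c * 3 ^ d := h2.mul_left _
    omega
  rcases hac with rfl | rfl
  · rcases hbd with rfl | rfl
    · -- h = 1, impossible
      have : 0 < 2 ^ c * 3 ^ d := by positivity
      simp at hdiff
      omega
    · -- 5 + 2^c = 3^b
      simp at hdiff
      obtain ⟨hb, hc⟩ := aux1 b c hdiff
      subst hb; subst hc
      norm_num
  · rcases hbd with rfl | rfl
    · -- 5 + 3^d = 2^a
      simp at hdiff
      rcases aux2 a d hdiff with ⟨ha, hd⟩ | ⟨ha, hd⟩ <;> subst ha <;> subst hd <;> norm_num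
    · -- k = 1, h = 6
      simp at hdiff
      left
      constructor
      · omega
      · norm_num
end

section
/- The only solutions in nonnegative integers (m, n) of the equation 2^m − 3^n = 5 are (m, n) = (3, 1) and (m, n) = (5, 3). -/
lemma pow_mod_period (a p k n : ℕ) (hk : 1 < k) (h : a ^ p % k = 1) :
    a ^ n % k = a ^ (n % p) % k := by
  conv_lhs => rw [← Nat.div_add_mod n p]
  rw [pow_add, pow_mul, Nat.mul_mod, Nat.pow_mod, h, one_pow,
    Nat.mod_eq_of_lt hk, one_mul, Nat.mod_mod_of_dvd _ dvd_rfl]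

/-- The only nonnegative integer solutions of 2^m - 3^n = 5 are (3, 1) and (5, 3). -/
theorem two_pow_sub_three_pow_eq_five (m n : ℕ) (h : 2 ^ m = 3 ^ n + 5) :
    (m = 3 ∧ n = 1) ∨ (m = 5 ∧ n = 3) := by
  by_cases hm : m ≤ 5
  · have h2 : 2 ^ m ≤ 32 := by
      calc 2 ^ m ≤ 2 ^ 5 := Nat.pow_le_pow_right (by norm_num) hm
        _ = 32 := by norm_num
    have hn : n ≤ 3 := by
      by_contra hn
      push_neg at hn
      have : 3 ^ 4 ≤ 3 ^ n := Nat.pow_le_pow_right (by norm_num) hn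
      omega
    interval_cases m <;> interval_cases n <;> omega
  · exfalso
    push_neg at hm
    have h64 : 2 ^ m % 64 = 0 := by
      obtain ⟨k, rfl⟩ : ∃ k, m = 6 + k := ⟨m - 6, by omega⟩
      rw [pow_add]
      norm_num [Nat.mul_mod_right]
    have h3 : 3 ^ n % 64 = 59 := by
      omega
    have hp : 3 ^ (n % 16) % 64 = 59 := by
      rw [← pow_mod_period 3 16 64 n (by norm_num) (by norm_num)]; exact h3
    have hr : n % 16 = 11 := by
      have hlt : n % 16 < 16 := Nat.mod_lt _ (by norm_num)
      interval_cases hc : (n % 16) <;> first | rfl | norm_num at hp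
    have h17 : 3 ^ n % 17 = 7 := by
      rw [pow_mod_period 3 16 17 n (by norm_num) (by norm_num), hr]; norm_num
    have h217 : 2 ^ m % 17 = 12 := by
      omega
    have hp2 : 2 ^ (m % 8) % 17 = 12 := by
      rw [← pow_mod_period 2 8 17 m (by norm_num) (by norm_num)]; exact h217
    have hlt : m % 8 < 8 := Nat.mod_lt _ (by norm_num)
    interval_cases hc : (m % 8) <;> norm_num at hp2
end

section
/- The only ways to write 17 as a difference h − k of harmonic numbers h and k are: 18 − 1 and 81 − 64. -/
lemma two_pow_mod_three (n : ℕ) : 2 ^ n % 3 = if Even n then 1 else 2 := by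
  induction n with
  | zero => rfl
  | succ n ih =>
    rw [pow_succ, Nat.mul_mod, ih]
    simp only [Nat.even_add_one]
    split_ifs <;> rfl

lemma three_pow_mod_eight_s14 (n : ℕ) : 3 ^ n % 8 = if Even n then 1 else 3 := by
  induction n with
  | zero => rfl
  | succ n ih =>
    rw [pow_succ, Nat.mul_mod, ih]
    simp only [Nat.even_add_one]
    split_ifs <;> rfl

lemma eq_add_one_of_sq_eq_sq_add_prime {p s t : ℕ} (hp : p.Prime) (h : s ^ 2 = t ^ 2 + p) :
    s = t + 1 ∧ 2 * t + 1 = p := by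
  have hts : t ≤ s := by
    by_contra! hst
    have := Nat.pow_lt_pow_left hst two_ne_zero
    omega
  have hfac : (s + t) * (s - t) = p := by rw [← Nat.sq_sub_sq, h, Nat.add_sub_cancel_left]
  rcases Nat.prime_mul_iff.mp (hfac ▸ hp) with ⟨-, hdiff⟩ | ⟨hdiff, hsum⟩
  · rw [hdiff, mul_one] at hfac
    omega
  · exact absurd hdiff.two_le (by omega)

lemma eq_zero_or_eq_zero_of_pow_mul_eq_pow_mul_add {p a c x y m : ℕ} (hm : ¬ p ∣ m)
    (h : p ^ a * x = p ^ c * y + m) : a = 0 ∨ c = 0 := by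
  by_contra! hac
  have hpa : p ∣ p ^ a * x := (dvd_pow_self p hac.1).mul_right x
  have hpc : p ∣ p ^ c * y := (dvd_pow_self p hac.2).mul_right y
  rw [h] at hpa
  exact hm ((Nat.dvd_add_right hpc).mp hpa)

lemma two_pow_ne_three_pow_add_seventeen (a d : ℕ) : 2 ^ a ≠ 3 ^ d + 17 := by
  intro h
  have hmod := three_pow_mod_eight_s14 d
  rcases Nat.lt_or_ge a 3 with ha | ha
  · interval_cases a <;> simp at h
  · have : 2 ^ 3 ∣ 2 ^ a := pow_dvd_pow 2 ha
    split_ifs at hmod <;> omega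

lemma three_pow_eq_two_pow_add_seventeen {b c : ℕ} (h : 3 ^ b = 2 ^ c + 17) : b = 4 ∧ c = 6 := by
  have hc_even : Even c := by
    have hb : b ≠ 0 := by rintro rfl; simp at h
    have : 3 ∣ 3 ^ b := dvd_pow_self 3 hb
    have := two_pow_mod_three c
    split_ifs at this with hc
    · exact hc
    · omega
  have hb_even : Even b := by
    have hmod := three_pow_mod_eight_s14 b
    obtain ⟨y, rfl⟩ := hc_even
    rcases Nat.eq_zero_or_pos y with rfl | hy
    · simp only [add_zero, pow_zero] at h
      split_ifs at hmod <;> omega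
    · have : 2 ^ 2 ∣ 2 ^ (y + y) := pow_dvd_pow 2 (by omega)
      split_ifs at hmod with hb
      · exact hb
      · omega
  obtain ⟨x, rfl⟩ := hb_even
  obtain ⟨y, rfl⟩ := hc_even
  have hsq : (3 ^ x) ^ 2 = (2 ^ y) ^ 2 + 17 := by rw [← pow_mul, ← pow_mul, mul_two, mul_two, h]
  obtain ⟨h3, h2⟩ := eq_add_one_of_sq_eq_sq_add_prime (by norm_num) hsq
  have hy : y = 3 := Nat.pow_right_injective le_rfl (show 2 ^ y = 2 ^ 3 by omega)
  have hx : x = 2 := Nat.pow_right_injective (by norm_num) (show 3 ^ x = 3 ^ 2 by omega)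
  omega

/-- The only ways to write 17 as a difference of harmonic numbers are
18 - 1 and 81 - 64. -/
theorem seventeen_as_difference (h k : ℕ) (hh : IsHarmonic h) (hk : IsHarmonic k)
    (hdiff : 17 + k = h) :
    (h = 18 ∧ k = 1) ∨ (h = 81 ∧ k = 64) := by
  obtain ⟨a, b, rfl⟩ := hh
  obtain ⟨c, d, rfl⟩ := hk
  have hsum : 2 ^ a * 3 ^ b = 2 ^ c * 3 ^ d + 17 := by omega
  have h2 := eq_zero_or_eq_zero_of_pow_mul_eq_pow_mul_add (by norm_num) hsum
  have h3 := eq_zero_or_eq_zero_of_pow_mul_eq_pow_mul_add (by norm_num)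
    (by linarith : 3 ^ b * 2 ^ a = 3 ^ d * 2 ^ c + 17)
  rcases h2 with rfl | rfl <;> rcases h3 with rfl | rfl <;>
    simp only [pow_zero, one_mul, mul_one] at hsum ⊢
  · omega
  · obtain ⟨rfl, rfl⟩ := three_pow_eq_two_pow_add_seventeen hsum
    norm_num
  · exact absurd hsum (two_pow_ne_three_pow_add_seventeen a d)
  · exact Or.inl ⟨by linarith, trivial⟩
end

section
/- For all integers k ≥ 1 and l ≥ 1, the number 2^(2^k) + 2^(2^l) + 2 is not a harmonic number; that is, the equation 2^(2^k) + 2^(2^l) + 2 = 2^s·3^t has no solutions in nonnegative integers s, t. -/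
/-!
Write `N = 2^(2^k) + 2^(2^l) + 2`. For `k ≥ 1` the exponent `2^k` is even, so `2^(2^k) ≡ 1 (mod 3)`
and `4 ∣ 2^(2^k)`. Hence `N ≡ 1 (mod 3)`, forcing `t = 0`, and `N ≡ 2 (mod 4)`, forcing `2^s = 2`;
but `N > 2`.
-/

namespace Nat

lemma two_pow_two_pow_eq_four_pow {k : ℕ} (hk : 1 ≤ k) : 2 ^ 2 ^ k = 4 ^ 2 ^ (k - 1) := by
  obtain ⟨j, rfl⟩ := Nat.exists_eq_add_of_le hk
  rw [Nat.add_sub_cancel_left, pow_add, pow_one, pow_mul]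
  norm_num

lemma two_pow_two_pow_mod_three {k : ℕ} (hk : 1 ≤ k) : 2 ^ 2 ^ k % 3 = 1 := by
  simp [two_pow_two_pow_eq_four_pow hk, pow_mod]

lemma four_dvd_two_pow_two_pow {k : ℕ} (hk : 1 ≤ k) : 4 ∣ 2 ^ 2 ^ k := by
  rw [two_pow_two_pow_eq_four_pow hk]
  exact dvd_pow_self 4 (by positivity)

lemma eq_zero_of_not_three_dvd_two_pow_mul_three_pow {s t : ℕ} (h : ¬ 3 ∣ 2 ^ s * 3 ^ t) :
    t = 0 := by
  by_contra ht
  exact h (Dvd.dvd.mul_left (dvd_pow_self 3 ht) _)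

lemma two_pow_eq_two_of_mod_four {s : ℕ} (h : 2 ^ s % 4 = 2) : 2 ^ s = 2 := by
  match s with
  | 0 => simp at h
  | 1 => rfl
  | s + 2 => simp [pow_add, mul_mod_left] at h

end Nat

/-- For k, l ≥ 1 the number 2^(2^k) + 2^(2^l) + 2 is never of the form 2^s * 3^t. -/
theorem sum_fermat_not_harmonic (k l s t : ℕ) (hk : 1 ≤ k) (hl : 1 ≤ l) :
    2 ^ 2 ^ k + 2 ^ 2 ^ l + 2 ≠ 2 ^ s * 3 ^ t := by
  intro h
  have hk3 := Nat.two_pow_two_pow_mod_three hk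
  have hl3 := Nat.two_pow_two_pow_mod_three hl
  obtain rfl : t = 0 := Nat.eq_zero_of_not_three_dvd_two_pow_mul_three_pow (by rw [← h]; omega)
  rw [pow_zero, mul_one] at h
  have hk4 := Nat.four_dvd_two_pow_two_pow hk
  have hl4 := Nat.four_dvd_two_pow_two_pow hl
  have hs : 2 ^ s = 2 := Nat.two_pow_eq_two_of_mod_four (by rw [← h]; omega)
  have : 4 ≤ 2 ^ 2 ^ k := Nat.le_of_dvd (by positivity) hk4
  omega
end

section
/- The only ways to write 7 as a difference h − k of harmonic numbers h and k are: 8 − 1, 9 − 2, and 16 − 9. -/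
lemma pow_mod_period_s17 (x m p d : ℕ) (hp : x ^ p % m = 1 % m) :
    x ^ d % m = x ^ (d % p) % m := by
  conv_lhs => rw [← Nat.div_add_mod d p, pow_add, pow_mul]
  rw [Nat.mul_mod, Nat.pow_mod, hp, ← Nat.pow_mod, one_pow, ← Nat.mul_mod, one_mul]

lemma L1 (b c : ℕ) (h : 3 ^ b = 7 + 2 ^ c) : b = 2 ∧ c = 1 := by
  by_cases hc : c ≤ 2
  · have h2 : 2 ^ c ≤ 4 := by
      calc 2 ^ c ≤ 2 ^ 2 := Nat.pow_le_pow_right (by norm_num) hc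
      _ = 4 := rfl
    have hb : b < 3 := by
      by_contra hb
      have : 3 ^ 3 ≤ 3 ^ b := Nat.pow_le_pow_right (by norm_num) (by omega)
      omega
    interval_cases b <;> interval_cases c <;> simp_all
  · exfalso
    obtain ⟨c', rfl⟩ : ∃ c', c = c' + 3 := ⟨c - 3, by omega⟩
    have e2 : 2 ^ (c' + 3) = 8 * 2 ^ c' := by ring
    have hm8 : 3 ^ b % 8 = 7 := by omega
    have hper : 3 ^ b % 8 = 3 ^ (b % 2) % 8 := pow_mod_period_s17 _ _ _ _ (by norm_num)
    rcases Nat.mod_two_eq_zero_or_one b with h' | h' <;> rw [h'] at hper <;> norm_num at hper <;> omega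

lemma L2 (a d : ℕ) (h : 2 ^ a = 7 + 3 ^ d) : (a = 3 ∧ d = 0) ∨ (a = 4 ∧ d = 2) := by
  by_cases ha : a ≤ 4
  · have h2 : 2 ^ a ≤ 16 := by
      calc 2 ^ a ≤ 2 ^ 4 := Nat.pow_le_pow_right (by norm_num) ha
      _ = 16 := rfl
    have hd : d < 3 := by
      by_contra hd
      have : 3 ^ 3 ≤ 3 ^ d := Nat.pow_le_pow_right (by norm_num) (by omega)
      omega
    interval_cases a <;> interval_cases d <;> simp_all
  · exfalso
    obtain ⟨a', rfl⟩ : ∃ a', a = a' + 5 := ⟨a - 5, by omega⟩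
    have e2 : 2 ^ (a' + 5) = 32 * 2 ^ a' := by ring
    rcases Nat.eq_zero_or_pos d with rfl | hd1
    · norm_num at h; omega
    obtain ⟨d', rfl⟩ : ∃ d', d = d' + 1 := ⟨d - 1, by omega⟩
    have e3 : 3 ^ (d' + 1) = 3 * 3 ^ d' := by ring
    -- a is even
    have hmod3 : 2 ^ (a' + 5) % 3 = 1 := by omega
    have hper3 : 2 ^ (a' + 5) % 3 = 2 ^ ((a' + 5) % 2) % 3 :=
      pow_mod_period_s17 _ _ _ _ (by norm_num)
    have ha2 : (a' + 5) % 2 = 0 := by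
      rcases Nat.mod_two_eq_zero_or_one (a' + 5) with h' | h'
      · exact h'
      · rw [h'] at hper3; norm_num at hper3; omega
    -- d ≡ 6 [MOD 8]
    have hm32 : 3 ^ (d' + 1) % 32 = 25 := by omega
    have hper32 : 3 ^ (d' + 1) % 32 = 3 ^ ((d' + 1) % 8) % 32 :=
      pow_mod_period_s17 _ _ _ _ (by norm_num)
    have hd8 : (d' + 1) % 8 = 6 := by
      have hr : (d' + 1) % 8 = 0 ∨ (d' + 1) % 8 = 1 ∨ (d' + 1) % 8 = 2 ∨ (d' + 1) % 8 = 3 ∨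
          (d' + 1) % 8 = 4 ∨ (d' + 1) % 8 = 5 ∨ (d' + 1) % 8 = 6 ∨ (d' + 1) % 8 = 7 := by omega
      rcases hr with h' | h' | h' | h' | h' | h' | h' | h' <;>
        rw [h'] at hper32 <;> norm_num at hper32 <;> omega
    -- mod 41 contradiction
    have hper41d : 3 ^ (d' + 1) % 41 = 3 ^ ((d' + 1) % 8) % 41 :=
      pow_mod_period_s17 _ _ _ _ (by norm_num)
    rw [hd8] at hper41d
    norm_num at hper41d
    have hm41 : 2 ^ (a' + 5) % 41 = 39 := by omega
    have hper41a : 2 ^ (a' + 5) % 41 = 2 ^ ((a' + 5) % 20) % 41 :=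
      pow_mod_period_s17 _ _ _ _ (by norm_num)
    have hr : (a' + 5) % 20 = 0 ∨ (a' + 5) % 20 = 2 ∨ (a' + 5) % 20 = 4 ∨ (a' + 5) % 20 = 6 ∨
        (a' + 5) % 20 = 8 ∨ (a' + 5) % 20 = 10 ∨ (a' + 5) % 20 = 12 ∨ (a' + 5) % 20 = 14 ∨
        (a' + 5) % 20 = 16 ∨ (a' + 5) % 20 = 18 := by omega
    rcases hr with h' | h' | h' | h' | h' | h' | h' | h' | h' | h' <;>
      rw [h'] at hper41a <;> norm_num at hper41a <;> omega

/-- The only ways to write 7 as a difference of harmonic numbers are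
8 - 1, 9 - 2, and 16 - 9. -/
theorem seven_as_difference (h k : ℕ) (hh : IsHarmonic h) (hk : IsHarmonic k)
    (hdiff : 7 + k = h) :
    (h = 8 ∧ k = 1) ∨ (h = 9 ∧ k = 2) ∨ (h = 16 ∧ k = 9) := by
  obtain ⟨a, b, rfl⟩ := hh
  obtain ⟨c, d, rfl⟩ := hk
  -- not both divisible by 3
  have h3 : b = 0 ∨ d = 0 := by
    by_contra hcon
    push_neg at hcon
    obtain ⟨hb, hd⟩ := hcon
    obtain ⟨b', rfl⟩ : ∃ b', b = b' + 1 := ⟨b - 1, by omega⟩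
    obtain ⟨d', rfl⟩ : ∃ d', d = d' + 1 := ⟨d - 1, by omega⟩
    have e1 : 2 ^ a * 3 ^ (b' + 1) = 3 * (2 ^ a * 3 ^ b') := by ring
    have e2 : 2 ^ c * 3 ^ (d' + 1) = 3 * (2 ^ c * 3 ^ d') := by ring
    omega
  -- not both even
  have h2 : a = 0 ∨ c = 0 := by
    by_contra hcon
    push_neg at hcon
    obtain ⟨ha, hc⟩ := hcon
    obtain ⟨a', rfl⟩ : ∃ a', a = a' + 1 := ⟨a - 1, by omega⟩
    obtain ⟨c', rfl⟩ : ∃ c', c = c' + 1 := ⟨c - 1, by omega⟩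
    have e1 : 2 ^ (a' + 1) * 3 ^ b = 2 * (2 ^ a' * 3 ^ b) := by ring
    have e2 : 2 ^ (c' + 1) * 3 ^ d = 2 * (2 ^ c' * 3 ^ d) := by ring
    omega
  rcases h2 with rfl | rfl
  · -- a = 0 : h = 3^b
    rcases h3 with rfl | rfl
    · -- b = 0 : h = 1, impossible
      have : 1 ≤ 2 ^ c * 3 ^ d := Nat.one_le_iff_ne_zero.mpr (by positivity)
      simp at hdiff
      omega
    · -- d = 0 : 3^b = 7 + 2^c
      simp only [pow_zero, one_mul, mul_one] at hdiff ⊢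
      obtain ⟨hb, hc⟩ := L1 b c hdiff.symm
      subst hb; subst hc
      norm_num
  · -- c = 0 : k = 3^d
    rcases h3 with rfl | rfl
    · -- b = 0 : 2^a = 7 + 3^d
      simp only [pow_zero, one_mul, mul_one] at hdiff ⊢
      rcases L2 a d hdiff.symm with ⟨ha, hd⟩ | ⟨ha, hd⟩ <;> subst ha <;> subst hd <;> norm_num
    · -- d = 0 : k = 1, 2^a * 3^b = 8
      simp only [pow_zero, one_mul, mul_one] at hdiff ⊢
      have hb : b = 0 := by
        by_contra hb
        obtain ⟨b', rfl⟩ : ∃ b', b = b' + 1 := ⟨b - 1, by omega⟩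
        have e1 : 2 ^ a * 3 ^ (b' + 1) = 3 * (2 ^ a * 3 ^ b') := by ring
        omega
      subst hb
      simp only [pow_zero, mul_one] at hdiff ⊢
      have ha : a < 4 := by
        by_contra ha
        have : 2 ^ 4 ≤ 2 ^ a := Nat.pow_le_pow_right (by norm_num) (by omega)
        omega
      interval_cases a <;> simp_all
end

section
/- If p and q are primes such that 2^p − 1 and 2^q − 1 are both prime, and the sum (2^p − 1) + (2^q − 1) is a harmonic number, then p = q = 2 (the only instance being 3 + 3 = 6). -/
private lemma three_pow_mod16 (b : ℕ) : 3 ^ b % 16 = 3 ^ (b % 4) % 16 := by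
  conv_lhs => rw [← Nat.div_add_mod b 4, pow_add, pow_mul]
  rw [Nat.mul_mod, Nat.pow_mod]
  simp [Nat.mod_mod_of_dvd]

private lemma three_pow_mod5 (b : ℕ) : 3 ^ b % 5 = 3 ^ (b % 4) % 5 := by
  conv_lhs => rw [← Nat.div_add_mod b 4, pow_add, pow_mul]
  rw [Nat.mul_mod, Nat.pow_mod]
  simp [Nat.mod_mod_of_dvd]

private lemma aux_case (q b : ℕ) (hq : q.Prime) (hq2 : q ≠ 2)
    (h : 3 ^ b = 2 ^ (q - 1) + 1) : False := by
  obtain ⟨k, hk⟩ := hq.odd_of_ne_two hq2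
  have hk1 : 1 ≤ k := by have := hq.two_le; omega
  have hq1 : q - 1 = 2 * k := by omega
  have h4 : 2 ^ (q - 1) = 4 ^ k := by
    rw [hq1, pow_mul]; norm_num
  rw [h4] at h
  rcases Nat.lt_or_ge k 2 with hk2 | hk2
  · -- k = 1, so 3^b = 5
    have hk' : k = 1 := by omega
    subst hk'
    norm_num at h
    rcases b with _ | b
    · simp at h
    · rw [pow_succ] at h
      omega
  · -- k ≥ 2, so 16 ∣ 4^k
    have h16 : (16 : ℕ) ∣ 4 ^ k := by
      have : (4 : ℕ) ^ 2 ∣ 4 ^ k := pow_dvd_pow 4 hk2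
      simpa using this
    have hb16 : 3 ^ b % 16 = 1 := by omega
    rw [three_pow_mod16] at hb16
    have hr : b % 4 < 4 := Nat.mod_lt _ (by norm_num)
    have hb4 : b % 4 = 0 := by
      interval_cases h : b % 4 <;> simp_all
    have hb5 : 3 ^ b % 5 = 1 := by
      rw [three_pow_mod5, hb4]; norm_num
    have h5dvd : (5 : ℕ) ∣ 4 ^ k := by omega
    have := (Nat.Prime.dvd_of_dvd_pow (by norm_num : Nat.Prime 5) h5dvd)
    norm_num at this

/-- If the sum of two Mersenne primes is harmonic, then both primes equal 3,
i.e. p = q = 2. -/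
theorem sum_mersenne_harmonic (p q : ℕ) (hp : p.Prime) (hq : q.Prime)
    (hmp : Nat.Prime (2 ^ p - 1)) (hmq : Nat.Prime (2 ^ q - 1))
    (hsum : IsHarmonic ((2 ^ p - 1) + (2 ^ q - 1))) :
    p = 2 ∧ q = 2 := by
  obtain ⟨a, b, hn⟩ := hsum
  have hp2 := hp.two_le
  have hq2 := hq.two_le
  have hX : 2 ^ p = 4 * 2 ^ (p - 2) := by
    rw [show (4 : ℕ) = 2 ^ 2 by norm_num, ← pow_add]
    congr 1; omega
  have hY : 2 ^ q = 4 * 2 ^ (q - 2) := by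
    rw [show (4 : ℕ) = 2 ^ 2 by norm_num, ← pow_add]
    congr 1; omega
  have hXp : 2 ^ (p - 1) = 2 * 2 ^ (p - 2) := by
    rw [← pow_succ']; congr 1; omega
  have hYq : 2 ^ (q - 1) = 2 * 2 ^ (q - 2) := by
    rw [← pow_succ']; congr 1; omega
  have hXpos : 1 ≤ 2 ^ (p - 2) := Nat.one_le_two_pow
  have hYpos : 1 ≤ 2 ^ (q - 2) := Nat.one_le_two_pow
  rw [hX, hY] at hn
  -- show a = 1 and extract 3^b + 1 = 2^(p-1) + 2^(q-1)
  have ht : 3 ^ b + 1 = 2 ^ (p - 1) + 2 ^ (q - 1) := by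
    rcases a with _ | _ | a
    · -- a = 0 : the sum would be odd
      have hodd : 3 ^ b % 2 = 1 := by
        rw [Nat.pow_mod]; norm_num
      simp only [pow_zero, one_mul] at hn
      omega
    · -- a = 1
      rw [pow_one] at hn
      rw [hXp, hYq]
      omega
    · -- a ≥ 2 : sum divisible by 4, but it's ≡ 2 mod 4
      have : 2 ^ (a + 2) * 3 ^ b = 4 * (2 ^ a * 3 ^ b) := by ring
      rw [this] at hn
      omega
  by_cases hpp : p = 2 <;> by_cases hqq : q = 2
  · exact ⟨hpp, hqq⟩
  · exfalso
    subst hpp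
    norm_num at ht
    exact aux_case q b hq hqq (by omega)
  · exfalso
    subst hqq
    norm_num at ht
    exact aux_case p b hp hpp (by omega)
  · exfalso
    -- both p and q odd: sum mod 3 contradiction
    obtain ⟨k, hk⟩ := hp.odd_of_ne_two hpp
    obtain ⟨l, hl⟩ := hq.odd_of_ne_two hqq
    have hp4 : 2 ^ (p - 1) = 4 ^ k := by
      rw [show p - 1 = 2 * k by omega, pow_mul]; norm_num
    have hq4 : 2 ^ (q - 1) = 4 ^ l := by
      rw [show q - 1 = 2 * l by omega, pow_mul]; norm_num
    rw [hp4, hq4] at ht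
    have hm1 : 4 ^ k % 3 = 1 := by rw [Nat.pow_mod]; norm_num
    have hm2 : 4 ^ l % 3 = 1 := by rw [Nat.pow_mod]; norm_num
    have hk4 : 4 ≤ 4 ^ k := by
      calc (4:ℕ) = 4 ^ 1 := by norm_num
      _ ≤ 4 ^ k := Nat.pow_le_pow_right (by norm_num) (by omega)
    rcases b with _ | b
    · simp at ht; omega
    · rw [pow_succ] at ht
      omega
end
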